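/- arXiv:1410.8116 — 4 statements merged into one kernel-verified Lean document; each statement's English description precedes it below -/
import Mathlib

section
/- Let S be a finite set of real numbers with at least two elements, let m = min S and M = max S, and let d be a real number with d ∉ S and m < d < M. Set T = (S ∪ {d}) \ {m, M}, S₁ = (S ∪ {d}) \ {m}, S₂ = S \ {M}, S₃ = (S ∪ {d}) \ {M}, S₄ = S \ {m}. Then Δ(S)·★(S)·Δ(T)·★(T) = Δ(S₁)·★(S₁)·Δ(S₂)·★(S₂) + Δ(S₃)·★(S₃)·Δ(S₄)·★(S₄). -/
/-- `Δ(A) = ∏_{x,y ∈ A, x < y} (y - x)`. -/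
noncomputable def delta (A : Finset ℝ) : ℝ :=
  ∏ x ∈ A, ∏ y ∈ A.filter (fun y => x < y), (y - x)

/-- `★(A) = ∏_{x,y ∈ A, x < y} (x + y - 1)`. -/
noncomputable def starOp (A : Finset ℝ) : ℝ :=
  ∏ x ∈ A, ∏ y ∈ A.filter (fun y => x < y), (x + y - 1)

/-!
Since `(y - x) * (x + y - 1) = φ y - φ x` for `φ t = t * (t - 1)`, `Δ(A) ★(A)` is the product `P(A)`
of `f x y = φ y - φ x` over the pairs `x < y` of `A`, and adjoining `a ∉ A` multiplies `P(A)` by the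
factors `f` pairing `a` with the points of `A`. All six sets are `W = S \ {m, M}` with some of
`m, d, M` adjoined, so after cancelling the factors common to both sides the identity becomes
`f m M = f m d + f d M`, which holds because `f` is a difference of values of `φ`.
-/

open Finset

section OrderedPairProd

variable {α R : Type*} [LinearOrder α] [CommRing R]

noncomputable def orderedPairProd (f : α → α → R) (A : Finset α) : R :=
  ∏ x ∈ A, ∏ y ∈ A.filter (fun y => x < y), f x y

theorem orderedPairProd_mul (f g : α → α → R) (A : Finset α) :
    orderedPairProd (fun x y => f x y * g x y) A = orderedPairProd f A * orderedPairProd g A := by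
  simp only [orderedPairProd, prod_mul_distrib]

theorem orderedPairProd_insert (f : α → α → R) {a : α} {A : Finset α} (ha : a ∉ A) :
    orderedPairProd f (insert a A) =
      orderedPairProd f A * ∏ x ∈ A, f (min x a) (max x a) := by
  have row_a : (insert a A).filter (fun y => a < y) = A.filter (fun y => a < y) := by
    rw [filter_insert, if_neg (lt_irrefl a)]
  have row_x : ∀ x ∈ A, ∏ y ∈ (insert a A).filter (fun y => x < y), f x y =
      (if x < a then f x a else 1) * ∏ y ∈ A.filter (fun y => x < y), f x y := by
    intro x _
    rw [filter_insert]
    split_ifs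
    · exact prod_insert (by simp [ha])
    · rw [one_mul]
  have cross : ∀ x ∈ A, (if a < x then f a x else 1) * (if x < a then f x a else 1) =
      f (min x a) (max x a) := by
    intro x hx
    rcases lt_or_gt_of_ne (ne_of_mem_of_not_mem hx ha) with h | h
    · simp [h, h.not_gt, min_eq_left h.le, max_eq_right h.le]
    · simp [h, h.not_gt, min_eq_right h.le, max_eq_left h.le]
  unfold orderedPairProd
  rw [prod_insert ha, row_a, prod_congr rfl row_x, prod_mul_distrib, ← prod_congr rfl cross,
    prod_mul_distrib, ← prod_filter, ← prod_filter]
  ring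

theorem orderedPairProd_condensation (f : α → α → R) (W : Finset α) {m d M : α}
    (hmW : m ∉ W) (hdW : d ∉ W) (hMW : M ∉ W) (hmd : m < d) (hdM : d < M)
    (hf : f m M = f m d + f d M) :
    orderedPairProd f (insert m (insert M W)) * orderedPairProd f (insert d W) =
      orderedPairProd f (insert d (insert M W)) * orderedPairProd f (insert m W) +
        orderedPairProd f (insert d (insert m W)) * orderedPairProd f (insert M W) := by
  have hmM := hmd.trans hdM
  rw [orderedPairProd_insert f (by simp [hmM.ne, hmW] : m ∉ insert M W),
    orderedPairProd_insert f (by simp [hdM.ne, hdW] : d ∉ insert M W),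
    orderedPairProd_insert f (by simp [hmd.ne', hdW] : d ∉ insert m W),
    orderedPairProd_insert f hMW, orderedPairProd_insert f hmW, orderedPairProd_insert f hdW,
    prod_insert hMW, prod_insert hMW, prod_insert hmW, min_eq_right hmM.le, max_eq_left hmM.le,
    min_eq_right hdM.le, max_eq_left hdM.le, min_eq_left hmd.le, max_eq_right hmd.le, hf]
  ring

end OrderedPairProd

theorem delta_mul_starOp (A : Finset ℝ) :
    delta A * starOp A = orderedPairProd (fun x y => (y - x) * (x + y - 1)) A :=
  (orderedPairProd_mul _ _ A).symm

theorem kuo_condensation_identity_general (S : Finset ℝ) (m M d : ℝ)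
    (hmS : m ∈ S)
    (hMS : M ∈ S)
    (hdS : d ∉ S) (hmd : m < d) (hdM : d < M) :
    delta S * starOp S * delta (((insert d S).erase m).erase M) *
        starOp (((insert d S).erase m).erase M) =
      delta ((insert d S).erase m) * starOp ((insert d S).erase m) *
          delta (S.erase M) * starOp (S.erase M) +
        delta ((insert d S).erase M) * starOp ((insert d S).erase M) *
          delta (S.erase m) * starOp (S.erase m) := by
  have hmM := hmd.trans hdM
  set W := (S.erase m).erase M with hW
  have hmW : m ∉ W := by simp [hW]
  have hMW : M ∉ W := notMem_erase M _
  have hdW : d ∉ W := fun h => hdS (mem_of_mem_erase (mem_of_mem_erase h))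
  have hS₄ : S.erase m = insert M W := (insert_erase (mem_erase.2 ⟨hmM.ne', hMS⟩)).symm
  have hS₂ : S.erase M = insert m W := by
    rw [hW, erase_right_comm, insert_erase (mem_erase.2 ⟨hmM.ne, hmS⟩)]
  have hS : S = insert m (insert M W) := by rw [← hS₄, insert_erase hmS]
  have hT : ((insert d S).erase m).erase M = insert d W := by
    rw [erase_insert_of_ne hmd.ne', erase_insert_of_ne hdM.ne]
  have hS₁ : (insert d S).erase m = insert d (insert M W) := by
    rw [erase_insert_of_ne hmd.ne', hS₄]
  have hS₃ : (insert d S).erase M = insert d (insert m W) := by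
    rw [erase_insert_of_ne hdM.ne, hS₂]
  have factor : ∀ A B : Finset ℝ, delta A * starOp A * delta B * starOp B =
      orderedPairProd (fun x y => (y - x) * (x + y - 1)) A *
        orderedPairProd (fun x y => (y - x) * (x + y - 1)) B := by
    intro A B
    rw [mul_assoc (delta A * starOp A), delta_mul_starOp, delta_mul_starOp]
  rw [factor, factor, factor, hT, hS₁, hS₂, hS₃, hS₄, hS]
  exact orderedPairProd_condensation _ W hmW hdW hMW hmd hdM (by ring)

theorem kuo_condensation_identity (S : Finset ℝ) (m M d : ℝ)
    (hcard : 2 ≤ S.card)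
    (hmS : m ∈ S) (hm : ∀ x ∈ S, m ≤ x)
    (hMS : M ∈ S) (hM : ∀ x ∈ S, x ≤ M)
    (hdS : d ∉ S) (hmd : m < d) (hdM : d < M) :
    delta S * starOp S * delta (((insert d S).erase m).erase M) *
        starOp (((insert d S).erase m).erase M) =
      delta ((insert d S).erase m) * starOp ((insert d S).erase m) *
          delta (S.erase M) * starOp (S.erase M) +
        delta ((insert d S).erase M) * starOp ((insert d S).erase M) *
          delta (S.erase m) * starOp (S.erase m) :=
  kuo_condensation_identity_general S m M d hmS hMS hdS hmd hdM
end

section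
/- Let S be a finite set of real numbers with at least two elements, let m = min S and M = max S, and let d be a real number with d ∉ S and m < d < M. For a finite set A of reals write F(A) := (∏_{x∈A} x)·Δ(A)·⋆(A). Set T = (S ∪ {d}) \ {m, M}, S₁ = (S ∪ {d}) \ {m}, S₂ = S \ {M}, S₃ = (S ∪ {d}) \ {M}, S₄ = S \ {m}. Then F(S)·F(T) = F(S₁)·F(S₂) + F(S₃)·F(S₄). -/
/-- `⋆(A) = ∏_{x,y ∈ A, x < y} (x + y)`. -/
noncomputable def starOp' (A : Finset ℝ) : ℝ :=
  ∏ x ∈ A, ∏ y ∈ A.filter (fun y => x < y), (x + y)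

/-- `F(A) = (∏_{x ∈ A} x) · Δ(A) · ⋆(A)`. -/
noncomputable def F (A : Finset ℝ) : ℝ :=
  (∏ x ∈ A, x) * delta A * starOp' A

/-!
Adding a new point `t` to `A` multiplies `F(A)` by `t · ∏_{a ∈ A} |a - t| (t + a)`. Writing
`S = R ∪ {m, M}`, each of the three products in the identity becomes `F(R)² · m M d` times the
products of these factors over `R` for `t = m, M, d`, times one extra pair factor. What remains is
`(M - m)(M + m) = (M - d)(M + d) + (d - m)(d + m)`, i.e. `M² - m² = (M² - d²) + (d² - m²)`.
-/

namespace Finset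

variable {α β : Type*} [LinearOrder α] [CommMonoid β]

theorem prod_prod_filter_lt_insert {g : α → α → β} (hg : ∀ x y, g x y = g y x) {t : α}
    {A : Finset α} (ht : t ∉ A) :
    ∏ x ∈ insert t A, ∏ y ∈ (insert t A).filter (fun y => x < y), g x y =
      (∏ a ∈ A, g t a) * ∏ x ∈ A, ∏ y ∈ A.filter (fun y => x < y), g x y := by
  have inner (x : α) (hx : x ∈ A) :
      ∏ y ∈ (insert t A).filter (fun y => x < y), g x y =
        (if t < x then 1 else g t x) * ∏ y ∈ A.filter (fun y => x < y), g x y := by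
    have hxt : x ≠ t := ne_of_mem_of_not_mem hx ht
    rw [filter_insert]
    split_ifs with hxt' htx
    · exact absurd htx (lt_asymm hxt')
    · rw [prod_insert (by simp [ht]), hg]
    · rw [one_mul]
    · order
  rw [prod_insert ht, filter_insert, if_neg (lt_irrefl t), prod_congr rfl inner,
    prod_mul_distrib, ← mul_assoc, prod_ite, prod_const_one, one_mul,
    prod_filter_mul_prod_filter_not]

end Finset

theorem delta_eq_prod_abs (A : Finset ℝ) :
    delta A = ∏ x ∈ A, ∏ y ∈ A.filter (fun y => x < y), |y - x| := by
  refine Finset.prod_congr rfl fun x _ => Finset.prod_congr rfl fun y hy => ?_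
  exact (abs_of_pos (sub_pos.2 (Finset.mem_filter.1 hy).2)).symm

theorem delta_insert {t : ℝ} {A : Finset ℝ} (ht : t ∉ A) :
    delta (insert t A) = (∏ a ∈ A, |a - t|) * delta A := by
  rw [delta_eq_prod_abs, delta_eq_prod_abs,
    Finset.prod_prod_filter_lt_insert (fun x y => abs_sub_comm y x) ht]

theorem starOp'_insert {t : ℝ} {A : Finset ℝ} (ht : t ∉ A) :
    starOp' (insert t A) = (∏ a ∈ A, (t + a)) * starOp' A :=
  Finset.prod_prod_filter_lt_insert add_comm ht

theorem F_insert {t : ℝ} {A : Finset ℝ} (ht : t ∉ A) :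
    F (insert t A) = t * (∏ a ∈ A, |a - t| * (t + a)) * F A := by
  rw [F, F, Finset.prod_insert ht, delta_insert ht, starOp'_insert ht, Finset.prod_mul_distrib]
  ring

theorem F_condensation_insert {R : Finset ℝ} {m M d : ℝ} (hmR : m ∉ R) (hMR : M ∉ R)
    (hdR : d ∉ R) (hmd : m < d) (hdM : d < M) :
    F (insert m (insert M R)) * F (insert d R) =
      F (insert d (insert M R)) * F (insert m R) +
        F (insert d (insert m R)) * F (insert M R) := by
  have hmM := hmd.trans hdM
  have hm_MR : m ∉ insert M R := by simp [hmM.ne, hmR]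
  have hd_MR : d ∉ insert M R := by simp [hdM.ne, hdR]
  have hd_mR : d ∉ insert m R := by simp [hmd.ne', hdR]
  rw [F_insert hm_MR, F_insert hd_MR, F_insert hd_mR, Finset.prod_insert hMR,
    Finset.prod_insert hMR, Finset.prod_insert hmR, F_insert hmR, F_insert hMR, F_insert hdR,
    abs_of_pos (sub_pos.2 hmM), abs_of_pos (sub_pos.2 hdM), abs_of_neg (sub_neg.2 hmd)]
  ring

theorem kuo_condensation_even_general (S : Finset ℝ) (m M d : ℝ)
    (hmS : m ∈ S)
    (hMS : M ∈ S)
    (hdS : d ∉ S) (hmd : m < d) (hdM : d < M) :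
    F S * F (((insert d S).erase m).erase M) =
      F ((insert d S).erase m) * F (S.erase M) +
        F ((insert d S).erase M) * F (S.erase m) := by
  have hmM : m ≠ M := (hmd.trans hdM).ne
  obtain ⟨R, hmR, hMR, rfl⟩ : ∃ R, m ∉ R ∧ M ∉ R ∧ S = insert m (insert M R) :=
    ⟨(S.erase m).erase M, by simp, by simp, by
      rw [Finset.insert_erase (by simp [hmM.symm, hMS]), Finset.insert_erase hmS]⟩
  have hm_MR : m ∉ insert M R := by simp [hmM, hmR]
  have hdR : d ∉ R := fun h => hdS (by simp [h])
  simp only [Finset.erase_insert_of_ne hmd.ne', Finset.erase_insert_of_ne hdM.ne,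
    Finset.erase_insert_of_ne hmM, Finset.erase_insert hm_MR, Finset.erase_insert hMR]
  exact F_condensation_insert hmR hMR hdR hmd hdM

/-- The algebraic identity behind the induction step in the even case. -/
theorem kuo_condensation_even (S : Finset ℝ) (m M d : ℝ)
    (hcard : 2 ≤ S.card)
    (hmS : m ∈ S) (hm : ∀ x ∈ S, m ≤ x)
    (hMS : M ∈ S) (hM : ∀ x ∈ S, x ≤ M)
    (hdS : d ∉ S) (hmd : m < d) (hdM : d < M) :
    F S * F (((insert d S).erase m).erase M) =
      F ((insert d S).erase m) * F (S.erase M) +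
        F ((insert d S).erase M) * F (S.erase m) :=
  kuo_condensation_even_general S m M d hmS hMS hdS hmd hdM
end

section
/- Let S be a finite set of real numbers with at least two elements, let m = min S and M = max S, and let d be a real number with d ∉ S. Then (M + m − 1)·★((S ∪ {d}) \ {m})·★(S \ {M}) = (M + d − 1)·★(S)·★((S ∪ {d}) \ {m, M}). -/
open Finset

theorem starOp_insert {a : ℝ} {A : Finset ℝ} (ha : a ∉ A) :
    starOp (insert a A) = (∏ y ∈ A, (a + y - 1)) * starOp A := by
  have inner : ∀ x ∈ A, ∏ y ∈ (insert a A).filter (x < ·), (x + y - 1) =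
      (if x < a then a + x - 1 else 1) * ∏ y ∈ A.filter (x < ·), (x + y - 1) := by
    intro x _
    rw [filter_insert]
    split_ifs with hxa
    · rw [prod_insert (by simp [ha]), add_comm a x]
    · rw [one_mul]
  have lower : A.filter (fun y => ¬ a < y) = A.filter (· < a) :=
    filter_congr fun y hy => by
      rw [not_lt, le_iff_lt_or_eq, or_iff_left (ne_of_mem_of_not_mem hy ha)]
  rw [starOp, prod_insert ha, filter_insert, if_neg (lt_irrefl a), prod_congr rfl inner,
    prod_mul_distrib, ← prod_filter, ← lower, ← mul_assoc, prod_filter_mul_prod_filter_not]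
  rfl

theorem starOp_exchange {a b c : ℝ} {T : Finset ℝ} (haT : a ∉ T) (hbT : b ∉ T) (hcT : c ∉ T)
    (hab : a ≠ b) (hcb : c ≠ b) :
    (b + a - 1) * starOp (insert c (insert b T)) * starOp (insert a T) =
      (b + c - 1) * starOp (insert a (insert b T)) * starOp (insert c T) := by
  have haB : a ∉ insert b T := by simp [hab, haT]
  have hcB : c ∉ insert b T := by simp [hcb, hcT]
  rw [starOp_insert haB, starOp_insert hcB, starOp_insert haT, starOp_insert hcT,
    starOp_insert hbT, prod_insert hbT, prod_insert hbT]
  ring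

theorem lt_of_two_le_card_of_bounds {α : Type*} [LinearOrder α] {S : Finset α}
    (hcard : 2 ≤ S.card) {m M : α} (hm : ∀ x ∈ S, m ≤ x) (hM : ∀ x ∈ S, x ≤ M) : m < M := by
  obtain ⟨x, hx, y, hy, hxy⟩ := one_lt_card.mp hcard
  by_contra! h
  have eq_m : ∀ z ∈ S, z = m := fun z hz => le_antisymm ((hM z hz).trans h) (hm z hz)
  exact hxy ((eq_m x hx).trans (eq_m y hy).symm)

/-- Ratio simplification (22) of the paper, multiplied out. -/
theorem star_ratio_22 (S : Finset ℝ) (m M d : ℝ)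
    (hcard : 2 ≤ S.card)
    (hmS : m ∈ S) (hm : ∀ x ∈ S, m ≤ x)
    (hMS : M ∈ S) (hM : ∀ x ∈ S, x ≤ M)
    (hdS : d ∉ S) :
    (M + m - 1) * starOp ((insert d S).erase m) * starOp (S.erase M) =
      (M + d - 1) * starOp S * starOp (((insert d S).erase m).erase M) := by
  have hmM : m ≠ M := (lt_of_two_le_card_of_bounds hcard hm hM).ne
  have hdm : d ≠ m := ne_of_mem_of_not_mem hmS hdS |>.symm
  have hdM : d ≠ M := ne_of_mem_of_not_mem hMS hdS |>.symm
  set T := (S.erase m).erase M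
  have hST : S = insert m (insert M T) := by
    rw [insert_erase (mem_erase.mpr ⟨hmM.symm, hMS⟩), insert_erase hmS]
  have hmT : m ∉ T := by simp [T]
  have hMT : M ∉ T := by simp [T]
  have hdT : d ∉ T := fun h => hdS (mem_of_mem_erase (mem_of_mem_erase h))
  have hmB : m ∉ insert d (insert M T) := by simp [hdm.symm, hmM, hmT]
  rw [hST, erase_insert_of_ne hmM, erase_insert hMT, insert_comm, erase_insert hmB,
    erase_insert_of_ne hdM, erase_insert hMT]
  exact starOp_exchange hmT hMT hdT hmM hdM
end

section
/- Let S be a finite set of real numbers with at least two elements, let m = min S and M = max S, and let d be a real number with d ∉ S. Then (M + m − 1)·★((S ∪ {d}) \ {M})·★(S \ {m}) = (d + m − 1)·★(S)·★((S ∪ {d}) \ {m, M}). -/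
open Finset

theorem prod_prod_filter_lt_insert {α β : Type*} [LinearOrder α] [CommMonoid β]
    {f : α → α → β} (hf : ∀ x y, f x y = f y x) {a : α} {A : Finset α} (ha : a ∉ A) :
    ∏ x ∈ insert a A, ∏ y ∈ (insert a A).filter (x < ·), f x y =
      (∏ y ∈ A, f a y) * ∏ x ∈ A, ∏ y ∈ A.filter (x < ·), f x y := by
  have inner : ∀ x ∈ A, ∏ y ∈ (insert a A).filter (x < ·), f x y =
      (if x < a then f a x else 1) * ∏ y ∈ A.filter (x < ·), f x y := by
    intro x _
    rw [filter_insert]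
    split_ifs
    · rw [prod_insert (by simp [ha]), hf]
    · rw [one_mul]
  have below : A.filter (· < a) = A.filter (¬ a < ·) :=
    filter_congr fun y hy => by
      rw [not_lt, lt_iff_le_and_ne, and_iff_left (ne_of_mem_of_not_mem hy ha)]
  rw [prod_insert ha, filter_insert, if_neg (lt_irrefl a), prod_congr rfl inner,
    prod_mul_distrib, ← prod_filter, below, ← mul_assoc, prod_filter_mul_prod_filter_not]

theorem starOp_ratio {m M d : ℝ} {T : Finset ℝ} (hmM : m ≠ M) (hmT : m ∉ T) (hMT : M ∉ T)
    (hdm : d ≠ m) (hdT : d ∉ T) :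
    (M + m - 1) * starOp (insert d (insert m T)) * starOp (insert M T) =
      (d + m - 1) * starOp (insert m (insert M T)) * starOp (insert d T) := by
  have hdmT : d ∉ insert m T := by simp [hdm, hdT]
  have hmMT : m ∉ insert M T := by simp [hmM, hmT]
  rw [starOp_insert hdmT, starOp_insert hmMT, starOp_insert hmT, starOp_insert hMT,
    starOp_insert hdT, prod_insert hmT, prod_insert hMT]
  ring

/-- Ratio simplification (24) of the paper, multiplied out. -/
theorem star_ratio_24 (S : Finset ℝ) (m M d : ℝ)
    (hcard : 2 ≤ S.card)
    (hmS : m ∈ S) (hm : ∀ x ∈ S, m ≤ x)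
    (hMS : M ∈ S) (hM : ∀ x ∈ S, x ≤ M)
    (hdS : d ∉ S) :
    (M + m - 1) * starOp ((insert d S).erase M) * starOp (S.erase m) =
      (d + m - 1) * starOp S * starOp (((insert d S).erase m).erase M) := by
  have hmM : m ≠ M := by
    obtain ⟨a, ha, b, hb, hab⟩ := one_lt_card.1 hcard
    rintro rfl
    exact hab (by linarith [hm a ha, hM a ha, hm b hb, hM b hb])
  obtain ⟨T, rfl, hmT, hMT⟩ : ∃ T, S = insert m (insert M T) ∧ m ∉ T ∧ M ∉ T :=
    ⟨(S.erase m).erase M, by rw [insert_erase (mem_erase.2 ⟨hmM.symm, hMS⟩), insert_erase hmS],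
      by simp, by simp⟩
  simp only [mem_insert, not_or] at hdS
  obtain ⟨hdm, hdM, hdT⟩ := hdS
  have hmMT : m ∉ insert M T := by simp [hmM, hmT]
  simp only [erase_insert_of_ne hdM, erase_insert_of_ne hdm, erase_insert_of_ne hmM,
    erase_insert hmMT, erase_insert hMT]
  exact starOp_ratio hmM hmT hMT hdm hdT
end
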